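/- arXiv:math/0311435 — 10 statements merged into one kernel-verified Lean document; each statement's English description precedes it below -/
import Mathlib

section
/- Let p be an odd prime. For every x ∈ ℚ_p one has ‖x‖ ≤ 1 if and only if there exists y ∈ ℚ_p with y² = 1 + p·x². (Hence the valuation ring ℤ_p is defined in ℚ_p by the ring formula ∃y (y² = 1 + p x²).) -/
/-! If `‖x‖ ≤ 1` then `1 + p x² ≡ 1 (mod p)`, and since `2` is a unit for odd `p`, Hensel's lemma
lifts the root `1` of `X² - 1` to a root of `X² - (1 + p x²)`. If `‖x‖ > 1` then `‖p x²‖ > 1`,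
so `‖y²‖ = ‖1 + p x²‖ = ‖p x²‖`; but `y²` has even valuation and `p x²` has odd valuation. -/

namespace PadicInt

variable {p : ℕ} [Fact p.Prime]

theorem exists_sq_eq_of_norm_sub_one_lt {u : ℤ_[p]} (hu : ‖u - 1‖ < ‖(2 : ℤ_[p])‖ ^ 2) :
    ∃ z : ℤ_[p], z ^ 2 = u := by
  set F : Polynomial ℤ_[p] := Polynomial.X ^ 2 - Polynomial.C u
  have hF_one : F.aeval (1 : ℤ_[p]) = -(u - 1) := by simp [F]
  have hF'_one : F.derivative.aeval (1 : ℤ_[p]) = 2 := by simp [F, Polynomial.derivative_pow]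
  obtain ⟨z, hz, -⟩ := hensels_lemma (R := ℤ_[p]) (F := F) (a := 1)
    (by rwa [hF_one, hF'_one, norm_neg])
  exact ⟨z, by simpa [F, sub_eq_zero] using hz⟩

theorem norm_two_eq_one (hp : Odd p) : ‖(2 : ℤ_[p])‖ = 1 :=
  mod_cast norm_natCast_eq_one_iff.2 (Nat.coprime_two_right.2 hp)

end PadicInt

namespace Padic

variable {p : ℕ} [Fact p.Prime]

theorem valuation_p_mul_sq {x : ℚ_[p]} (hx : x ≠ 0) :
    ((p : ℚ_[p]) * x ^ 2).valuation = 1 + 2 * x.valuation := by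
  rw [valuation_mul (mod_cast (Fact.out : p.Prime).ne_zero) (pow_ne_zero 2 hx), valuation_p,
    valuation_pow]
  norm_num

theorem norm_sq_ne_norm_p_mul_sq (y : ℚ_[p]) {x : ℚ_[p]} (hx : x ≠ 0) :
    ‖y ^ 2‖ ≠ ‖(p : ℚ_[p]) * x ^ 2‖ := by
  have hpx : (p : ℚ_[p]) * x ^ 2 ≠ 0 :=
    mul_ne_zero (mod_cast (Fact.out : p.Prime).ne_zero) (pow_ne_zero 2 hx)
  rcases eq_or_ne y 0 with rfl | hy
  · simpa [eq_comm] using hpx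
  have hp1 : (1 : ℝ) < p := mod_cast (Fact.out : p.Prime).one_lt
  rw [norm_eq_zpow_neg_valuation (pow_ne_zero 2 hy), norm_eq_zpow_neg_valuation hpx,
    Ne, zpow_right_inj₀ (by linarith) hp1.ne', neg_inj, valuation_p_mul_sq hx, valuation_pow]
  omega

theorem one_lt_norm_p_mul_sq {x : ℚ_[p]} (hx : 1 < ‖x‖) : 1 < ‖(p : ℚ_[p]) * x ^ 2‖ := by
  have hx0 : x ≠ 0 := norm_pos_iff.1 (zero_lt_one.trans hx)
  rw [← not_le, norm_le_one_iff_val_nonneg, valuation_p_mul_sq hx0]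
  rw [← not_le, norm_le_one_iff_val_nonneg] at hx
  omega

end Padic

theorem zp_defined_by_squares (p : ℕ) [Fact p.Prime] (hp : Odd p) (x : ℚ_[p]) :
    ‖x‖ ≤ 1 ↔ ∃ y : ℚ_[p], y ^ 2 = 1 + (p : ℚ_[p]) * x ^ 2 := by
  constructor
  · intro hx
    set a : ℤ_[p] := ⟨x, hx⟩
    have hu : ‖(1 + p * a ^ 2) - 1‖ < ‖(2 : ℤ_[p])‖ ^ 2 := by
      rw [add_sub_cancel_left, PadicInt.norm_two_eq_one hp, one_pow,
        PadicInt.norm_lt_one_iff_dvd]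
      exact dvd_mul_right _ _
    obtain ⟨z, hz⟩ := PadicInt.exists_sq_eq_of_norm_sub_one_lt hu
    exact ⟨z, by exact_mod_cast congrArg ((↑) : ℤ_[p] → ℚ_[p]) hz⟩
  · rintro ⟨y, hy⟩
    by_contra! hx
    have hpx := Padic.one_lt_norm_p_mul_sq hx
    refine Padic.norm_sq_ne_norm_p_mul_sq y (x := x) (norm_pos_iff.1 (zero_lt_one.trans hx)) ?_
    rw [hy, Padic.add_eq_max_of_ne (by rw [norm_one]; exact hpx.ne), norm_one,
      max_eq_right hpx.le]
end

section
/- For every x ∈ ℚ_2 one has ‖x‖ ≤ 1 if and only if there exists y ∈ ℚ_2 with y³ = 1 + 2·x³. (Hence the valuation ring ℤ_2 is defined in ℚ_2 by the ring formula ∃y (y³ = 1 + 2x³).) -/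
/-!
If `‖x‖ ≤ 1` then `1 + p xⁿ` is a `p`-adic integer congruent to `1`, and Hensel's lemma applied
to `Xⁿ - (1 + p xⁿ)` at `1` yields an `n`-th root as soon as `p ∤ n`. If `‖x‖ > 1` then `p xⁿ`
dominates, so `yⁿ = 1 + p xⁿ` forces `n v(y) = 1 + n v(x)`, impossible for `n ≥ 2`.
-/

open Polynomial

namespace PadicInt

variable {p : ℕ} [Fact p.Prime]

theorem exists_pow_eq_of_norm_sub_one_lt {n : ℕ} (hpn : p.Coprime n) {a : ℤ_[p]}
    (ha : ‖a - 1‖ < 1) : ∃ z : ℤ_[p], z ^ n = a := by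
  have hF : ‖(X ^ n - C a).aeval (1 : ℤ_[p])‖ <
      ‖(X ^ n - C a).derivative.aeval (1 : ℤ_[p])‖ ^ 2 := by
    simpa [derivative_X_pow, norm_natCast_eq_one_iff.mpr hpn, norm_sub_rev] using ha
  obtain ⟨z, hz, -⟩ := hensels_lemma hF
  exact ⟨z, by simpa [sub_eq_zero] using hz⟩

end PadicInt

namespace Padic

variable {p : ℕ} [Fact p.Prime]

theorem valuation_eq_of_norm_eq {x y : ℚ_[p]} (hx : x ≠ 0) (hy : y ≠ 0) (h : ‖x‖ = ‖y‖) :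
    x.valuation = y.valuation := by
  have hp : (1 : ℝ) < p := mod_cast (Fact.out : p.Prime).one_lt
  rwa [norm_eq_zpow_neg_valuation hx, norm_eq_zpow_neg_valuation hy,
    zpow_right_inj₀ (by linarith) hp.ne', neg_inj] at h

theorem exists_pow_eq_one_add_mul_pow {n : ℕ} (hpn : p.Coprime n) {x : ℚ_[p]} (hx : ‖x‖ ≤ 1) :
    ∃ y : ℚ_[p], y ^ n = 1 + p * x ^ n := by
  set x₀ : ℤ_[p] := ⟨x, hx⟩
  have hp : (p : ℝ)⁻¹ < 1 := inv_lt_one_of_one_lt₀ (mod_cast (Fact.out : p.Prime).one_lt)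
  have hsmall : ‖(1 + p * x₀ ^ n) - 1‖ < 1 := by
    rw [add_sub_cancel_left, norm_mul, PadicInt.norm_p]
    calc (p : ℝ)⁻¹ * ‖x₀ ^ n‖ ≤ (p : ℝ)⁻¹ * 1 := by gcongr; exact PadicInt.norm_le_one _
      _ < 1 := by rwa [mul_one]
  obtain ⟨z, hz⟩ := PadicInt.exists_pow_eq_of_norm_sub_one_lt hpn hsmall
  exact ⟨z, by simpa using congrArg ((↑) : ℤ_[p] → ℚ_[p]) hz⟩

theorem norm_le_one_of_pow_eq_one_add_mul_pow {n : ℕ} (hn : 2 ≤ n) {x y : ℚ_[p]}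
    (h : y ^ n = 1 + p * x ^ n) : ‖x‖ ≤ 1 := by
  by_contra hx
  have hx0 : x ≠ 0 := by rintro rfl; simp at hx
  have hvx : x.valuation < 0 := by rwa [norm_le_one_iff_val_nonneg, not_le] at hx
  have hp0 : (p : ℚ_[p]) ≠ 0 := by simp [(Fact.out : p.Prime).ne_zero]
  have hvpx : ((p : ℚ_[p]) * x ^ n).valuation = 1 + n * x.valuation := by
    rw [valuation_mul hp0 (pow_ne_zero _ hx0), valuation_p, valuation_pow]
  have hbig : 1 < ‖(p : ℚ_[p]) * x ^ n‖ := by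
    rw [← not_le, norm_le_one_iff_val_nonneg, hvpx]
    nlinarith
  have hnorm : ‖y ^ n‖ = ‖(p : ℚ_[p]) * x ^ n‖ := by
    rw [h, add_eq_max_of_ne (by rw [norm_one]; exact hbig.ne), norm_one, max_eq_right hbig.le]
  have hy0 : y ^ n ≠ 0 := norm_ne_zero_iff.mp (hnorm ▸ (zero_lt_one.trans hbig).ne')
  have hv := valuation_eq_of_norm_eq hy0 (mul_ne_zero hp0 (pow_ne_zero _ hx0)) hnorm
  rw [valuation_pow, hvpx] at hv
  have hn_dvd : (n : ℤ) ∣ 1 := ⟨y.valuation - x.valuation, by linarith⟩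
  have := Int.eq_one_of_dvd_one (by positivity) hn_dvd
  omega

theorem norm_le_one_iff_exists_pow_eq_one_add_mul_pow {n : ℕ} (hpn : p.Coprime n) (hn : 2 ≤ n)
    (x : ℚ_[p]) : ‖x‖ ≤ 1 ↔ ∃ y : ℚ_[p], y ^ n = 1 + p * x ^ n :=
  ⟨exists_pow_eq_one_add_mul_pow hpn, fun ⟨_, hy⟩ ↦ norm_le_one_of_pow_eq_one_add_mul_pow hn hy⟩

end Padic

theorem z2_defined_by_cubes (x : ℚ_[2]) :
    ‖x‖ ≤ 1 ↔ ∃ y : ℚ_[2], y ^ 3 = 1 + 2 * x ^ 3 := by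
  simpa using
    Padic.norm_le_one_iff_exists_pow_eq_one_add_mul_pow (p := 2) (by decide) (by norm_num) x
end

section
/- For every prime p, the set {x : Fin 1 → ℚ_p | ‖x 0‖ ≤ 1}, i.e. the valuation ring ℤ_p viewed as a subset of ℚ_p¹, is ∅-definable in the first-order language of rings. -/
open FirstOrder

noncomputable instance (p : ℕ) [Fact p.Prime] : FirstOrder.Ring.CompatibleRing ℚ_[p] :=
  FirstOrder.Ring.compatibleRingOfRing _

/-- Numeral terms in the language of rings. -/
def ringNatTerm (α : Type*) : ℕ → Language.ring.Term α
  | 0 => 0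
  | n + 1 => ringNatTerm α n + 1

@[simp] lemma realize_ringNatTerm {α : Type*} {R : Type*} [CommRing R]
    [FirstOrder.Ring.CompatibleRing R] (v : α → R) (n : ℕ) :
    Language.Term.realize v (ringNatTerm α n) = (n : R) := by
  induction n with
  | zero => simp [ringNatTerm]
  | succ n ih => simp [ringNatTerm, ih]

lemma padic_key (p : ℕ) [Fact p.Prime] (x : ℚ_[p]) :
    ‖x‖ ≤ 1 ↔ ∃ y : ℚ_[p], y * y = 1 + (p : ℚ_[p]) ^ 3 * (x * x * x * x) := by
  have hp : 1 < p := (Fact.out : p.Prime).one_lt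
  have hp1 : (1 : ℝ) < (p : ℝ) := by exact_mod_cast hp
  have hp0 : (0 : ℝ) < (p : ℝ) := by positivity
  constructor
  · intro hx
    set a : ℤ_[p] := ⟨x, hx⟩ with ha
    set F : Polynomial ℤ_[p] := Polynomial.X ^ 2 - Polynomial.C (1 + (p : ℤ_[p]) ^ 3 * a ^ 4)
      with hF
    have hFeval : F.eval 1 = -((p : ℤ_[p]) ^ 3 * a ^ 4) := by
      simp only [hF, Polynomial.eval_sub, Polynomial.eval_pow, Polynomial.eval_X,
        Polynomial.eval_C, one_pow]
      ring
    have hFderiv : F.derivative.eval 1 = 2 := by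
      simp only [hF, Polynomial.derivative_sub, Polynomial.derivative_C,
        Polynomial.derivative_X_pow, sub_zero, Polynomial.eval_mul, Polynomial.eval_pow,
        Polynomial.eval_X, Polynomial.eval_C, one_pow, mul_one]
      norm_num
    have hnorm1 : ‖F.eval 1‖ ≤ ((p : ℝ))⁻¹ ^ 3 := by
      rw [hFeval, norm_neg, norm_mul, norm_pow, norm_pow,
        PadicInt.norm_p]
      calc ((p : ℝ))⁻¹ ^ 3 * ‖a‖ ^ 4 ≤ ((p : ℝ))⁻¹ ^ 3 * 1 :=
            mul_le_mul_of_nonneg_left (pow_le_one₀ (norm_nonneg a) a.norm_le_one)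
              (by positivity)
        _ = ((p : ℝ))⁻¹ ^ 3 := by ring
    have hnorm : ‖F.eval 1‖ < ‖F.derivative.eval 1‖ ^ 2 := by
      rw [hFderiv]
      rcases eq_or_ne p 2 with hp2 | hp2
      · subst hp2
        have h2 : ‖(2 : ℤ_[2])‖ = (2 : ℝ)⁻¹ := by
          have := PadicInt.norm_p (p := 2)
          simpa using this
        rw [h2]
        refine lt_of_le_of_lt hnorm1 ?_
        norm_num
      · have h2 : ‖(2 : ℤ_[p])‖ = 1 := by
          have hle : ‖(2 : ℤ_[p])‖ ≤ 1 := PadicInt.norm_le_one _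
          rcases lt_or_eq_of_le hle with hlt | heq
          · exfalso
            have : ‖((2 : ℤ) : ℤ_[p])‖ < 1 := by exact_mod_cast hlt
            rw [PadicInt.norm_int_lt_one_iff_dvd] at this
            have hple : (p : ℤ) ≤ 2 := Int.le_of_dvd (by norm_num) this
            have : p ≤ 2 := by exact_mod_cast hple
            omega
          · exact heq
        rw [h2, one_pow]
        refine lt_of_le_of_lt hnorm1 ?_
        have : ((p : ℝ))⁻¹ ^ 3 < 1 := by
          apply pow_lt_one₀ (by positivity) _ (by norm_num)
          rw [inv_lt_one_iff₀]; right; exact hp1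
        exact this
      
    obtain ⟨z, hz, -, -, -⟩ := hensels_lemma hnorm
    refine ⟨(z : ℚ_[p]), ?_⟩
    have hz' : z ^ 2 = 1 + (p : ℤ_[p]) ^ 3 * a ^ 4 := by
      rw [hF] at hz
      simp only [Polynomial.coe_aeval_eq_eval, Polynomial.eval_sub, Polynomial.eval_pow, Polynomial.eval_X,
        Polynomial.eval_C, sub_eq_zero] at hz
      exact hz
    have hcast := congrArg (fun t : ℤ_[p] => (t : ℚ_[p])) hz'
    push_cast at hcast
    linear_combination hcast
  · rintro ⟨y, hy⟩
    by_contra hx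
    push_neg at hx
    have hx0 : x ≠ 0 := by
      intro h; rw [h, norm_zero] at hx; linarith
    set s : ℚ_[p] := (p : ℚ_[p]) ^ 3 * (x * x * x * x) with hs
    have hvx : ‖x‖ = (p : ℝ) ^ (-x.valuation) := Padic.norm_eq_zpow_neg_valuation hx0
    have hvxneg : x.valuation < 0 := by
      by_contra hge
      push_neg at hge
      have : ‖x‖ ≤ 1 := (Padic.norm_le_one_iff_val_nonneg x).2 hge
      linarith
    have hns : ‖s‖ = (p : ℝ) ^ (-(3 : ℤ) - 4 * x.valuation) := by
      rw [hs, norm_mul, norm_mul, norm_mul, norm_mul, norm_pow, Padic.norm_p, hvx]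
      rw [show ((p : ℝ))⁻¹ ^ 3 = (p : ℝ) ^ (-(3 : ℤ)) by
        rw [inv_pow, ← zpow_natCast, ← zpow_neg]; norm_num]
      rw [← zpow_add₀ (ne_of_gt hp0), ← zpow_add₀ (ne_of_gt hp0), ← zpow_add₀ (ne_of_gt hp0),
        ← zpow_add₀ (ne_of_gt hp0)]
      ring_nf
    have hs_gt : (1 : ℝ) < ‖s‖ := by
      rw [hns]
      exact one_lt_zpow₀ hp1 (by omega)
    have hsum : ‖1 + s‖ = ‖s‖ := by
      rw [Padic.add_eq_max_of_ne (by rw [norm_one]; exact ne_of_lt hs_gt)]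
      rw [norm_one]
      exact max_eq_right (le_of_lt hs_gt)
    have hy0 : y ≠ 0 := by
      intro h
      rw [h, mul_zero] at hy
      have : ‖(1 + s : ℚ_[p])‖ = 0 := by rw [← hy, norm_zero]
      rw [hsum] at this
      linarith
    have hvy : ‖y‖ = (p : ℝ) ^ (-y.valuation) := Padic.norm_eq_zpow_neg_valuation hy0
    have hkey : (p : ℝ) ^ (-y.valuation + -y.valuation) = (p : ℝ) ^ (-(3 : ℤ) - 4 * x.valuation) := by
      rw [zpow_add₀ (ne_of_gt hp0), ← hvy, ← hns, ← hsum, ← hy, norm_mul]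
    have := zpow_right_injective₀ hp0 (ne_of_gt hp1) hkey
    omega

open FirstOrder.Ring Language

theorem zp_ring_definable (p : ℕ) [Fact p.Prime] :
    Set.Definable (∅ : Set ℚ_[p]) Language.ring {x : Fin 1 → ℚ_[p] | ‖x 0‖ ≤ 1} := by
  rw [Set.empty_definable_iff]
  refine ⟨BoundedFormula.ex
    ((Language.Term.var (Sum.inr (0 : Fin 1)) * Language.Term.var (Sum.inr (0 : Fin 1))) ='
      (1 + ringNatTerm _ p * ringNatTerm _ p * ringNatTerm _ p *
        (Language.Term.var (Sum.inl (0 : Fin 1)) * Language.Term.var (Sum.inl (0 : Fin 1)) *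
         Language.Term.var (Sum.inl (0 : Fin 1)) * Language.Term.var (Sum.inl (0 : Fin 1))))), ?_⟩
  ext x
  simp only [Set.mem_setOf_eq, Formula.Realize, BoundedFormula.realize_ex,
    BoundedFormula.realize_bdEqual, realize_mul, realize_add, realize_one,
    Language.Term.realize_var, realize_ringNatTerm]
  rw [padic_key]
  constructor
  · rintro ⟨y, hy⟩
    exact ⟨y, by simpa [Fin.snoc, pow_succ, mul_assoc, mul_comm, mul_left_comm] using hy⟩
  · rintro ⟨y, hy⟩
    exact ⟨y, by simpa [Fin.snoc, pow_succ, mul_assoc, mul_comm, mul_left_comm] using hy⟩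
end

section
/- Let R be a discrete valuation ring with uniformizer π, and let R^{(1)} = {x ∈ R : ∃ n : ℕ, x − π^n ∈ (π^{n+1})} (the elements with angular component 1). Then the map sending (0, x) ↦ 1 + π·x for x ∈ R and (1, x) ↦ π·x for x ∈ R^{(1)} is a well-defined bijection from the disjoint union ({0} × R) ∪ ({1} × R^{(1)}) onto R^{(1)}. -/
namespace Ideal

variable {R : Type*} [CommRing R] {π : R}

/-- The paper's `R^{(1)}`: for a uniformizer `π` of a discrete valuation ring, the elements of
angular component `1`. -/
def angularOneSet (π : R) : Set R :=
  {x : R | ∃ n : ℕ, x - π ^ n ∈ span {π ^ (n + 1)}}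

theorem one_add_mul_mem_angularOneSet (π x : R) : 1 + π * x ∈ angularOneSet π :=
  ⟨0, mem_span_singleton.mpr ⟨x, by ring⟩⟩

theorem mul_mem_angularOneSet {x : R} (hx : x ∈ angularOneSet π) : π * x ∈ angularOneSet π := by
  obtain ⟨n, hn⟩ := hx
  obtain ⟨c, hc⟩ := mem_span_singleton.mp hn
  exact ⟨n + 1, mem_span_singleton.mpr ⟨c, by linear_combination π * hc⟩⟩

theorem exists_eq_one_add_mul_or_eq_mul_of_mem_angularOneSet {y : R}
    (hy : y ∈ angularOneSet π) :
    (∃ x, y = 1 + π * x) ∨ ∃ x ∈ angularOneSet π, y = π * x := by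
  obtain ⟨n, hn⟩ := hy
  obtain ⟨c, hc⟩ := mem_span_singleton.mp hn
  cases n with
  | zero => exact Or.inl ⟨c, by linear_combination hc⟩
  | succ m =>
    exact Or.inr ⟨π ^ m + π ^ (m + 1) * c, ⟨m, mem_span_singleton.mpr ⟨c, by ring⟩⟩,
      by linear_combination hc⟩

end Ideal

theorem one_add_mul_ne_mul {R : Type*} [CommRing R] {π : R} (hπ : ¬IsUnit π) (x y : R) :
    1 + π * x ≠ π * y := fun h =>
  hπ (.of_mul_eq_one (y - x) (by linear_combination -h))

open Ideal

open Classical in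
theorem disjoint_union_R_R1_bij_general (R : Type*) [CommRing R] [IsDomain R]
    (π : R) (hπ : Irreducible π) :
    Set.BijOn (fun q : R × R => if q.1 = 0 then 1 + π * q.2 else π * q.2)
      (({0} ×ˢ (Set.univ : Set R)) ∪
        ({1} ×ˢ {x : R | ∃ n : ℕ, x - π ^ n ∈ Ideal.span {π ^ (n + 1)}}))
      {x : R | ∃ n : ℕ, x - π ^ n ∈ Ideal.span {π ^ (n + 1)}} := by
  change Set.BijOn _ (({0} ×ˢ Set.univ) ∪ ({1} ×ˢ angularOneSet π)) (angularOneSet π)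
  have h10 : (1 : R) ≠ 0 := one_ne_zero
  refine ⟨?_, ?_, ?_⟩
  · rintro ⟨a, x⟩ (⟨rfl, -⟩ | ⟨rfl, hx⟩)
    · simpa only [if_pos] using one_add_mul_mem_angularOneSet π x
    · simpa only [if_neg h10] using mul_mem_angularOneSet hx
  · rintro ⟨a, x⟩ (⟨rfl, -⟩ | ⟨rfl, -⟩) ⟨b, y⟩ (⟨rfl, -⟩ | ⟨rfl, -⟩) h <;>
      simp only [if_pos, if_neg h10] at h
    · rw [mul_left_cancel₀ hπ.ne_zero (add_left_cancel h)]
    · exact absurd h (one_add_mul_ne_mul hπ.not_isUnit x y)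
    · exact absurd h.symm (one_add_mul_ne_mul hπ.not_isUnit y x)
    · rw [mul_left_cancel₀ hπ.ne_zero h]
  · intro y hy
    rcases exists_eq_one_add_mul_or_eq_mul_of_mem_angularOneSet hy with ⟨x, rfl⟩ | ⟨x, hx, rfl⟩
    · exact ⟨(0, x), Or.inl ⟨rfl, trivial⟩, by simp⟩
    · exact ⟨(1, x), Or.inr ⟨rfl, hx⟩, by simp [h10]⟩

open Classical in
theorem disjoint_union_R_R1_bij (R : Type*) [CommRing R] [IsDomain R]
    [IsDiscreteValuationRing R] (π : R) (hπ : Irreducible π) :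
    Set.BijOn (fun q : R × R => if q.1 = 0 then 1 + π * q.2 else π * q.2)
      (({0} ×ˢ (Set.univ : Set R)) ∪
        ({1} ×ˢ {x : R | ∃ n : ℕ, x - π ^ n ∈ Ideal.span {π ^ (n + 1)}}))
      {x : R | ∃ n : ℕ, x - π ^ n ∈ Ideal.span {π ^ (n + 1)}} :=
  disjoint_union_R_R1_bij_general R π hπ
end

section
/- Let R be a discrete valuation ring with uniformizer π. The map sending (0, x, y) ↦ (x, x·y) and (1, x, y) ↦ (π·x·y, y), for x, y ∈ R∖{0}, is a well-defined bijection from the disjoint union ({0} × (R∖{0})²) ∪ ({1} × (R∖{0})²) onto (R∖{0})². (Its two branches map bijectively onto X₁ = {(a,b) ∈ (R∖{0})² : a divides b} and X₂ = {(a,b) ∈ (R∖{0})² : a does not divide b}, which partition (R∖{0})².) -/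
/-!
Pairs `(a, b)` of nonzero elements split according to whether `a ∣ b`. If it does, `b = a * y`
with `y` unique. If it does not, then in a discrete valuation ring `v(b) < v(a)`, so
`a = π * b * x` with `x` unique; conversely `π * x * y` never divides `y`, as `π` is not a unit.
Gluing the two parametrisations gives the bijection from the disjoint union.
-/

open Set

open Classical in
theorem Set.BijOn.ite_prod_union {ι α β : Type*} {i j : ι} (hij : i ≠ j) {s : Set α}
    {t₁ t₂ : Set β} {f g : α → β} (hf : BijOn f s t₁) (hg : BijOn g s t₂)
    (ht : Disjoint t₁ t₂) :
    BijOn (fun q : ι × α => if q.1 = i then f q.2 else g q.2)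
      ({i} ×ˢ s ∪ {j} ×ˢ s) (t₁ ∪ t₂) := by
  have hmk : ∀ k : ι, InjOn (Prod.mk k) s := fun k => (Prod.mk_right_injective k).injOn
  have hi : BijOn (fun q : ι × α => if q.1 = i then f q.2 else g q.2) ({i} ×ˢ s) t₁ := by
    rw [singleton_prod, ← bijOn_comp_iff (hmk i)]
    exact hf.congr fun x _ => by simp
  have hj : BijOn (fun q : ι × α => if q.1 = i then f q.2 else g q.2) ({j} ×ˢ s) t₂ := by
    rw [singleton_prod, ← bijOn_comp_iff (hmk j)]
    exact hg.congr fun x _ => by simp [hij.symm]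
  refine hi.union hj ((injOn_union ?_).2 ⟨hi.injOn, hj.injOn, ?_⟩)
  · exact disjoint_prod.2 (Or.inl (disjoint_singleton.2 hij))
  · exact fun x hx y hy => ht.ne_of_mem (hi.mapsTo hx) (hj.mapsTo hy)

section

variable {M : Type*}

theorem bijOn_mk_mul_nonzero [MonoidWithZero M] [IsCancelMulZero M] :
    BijOn (fun q : M × M => (q.1, q.1 * q.2)) ({x | x ≠ 0} ×ˢ {x | x ≠ 0})
      {q | (q.1 ≠ 0 ∧ q.2 ≠ 0) ∧ q.1 ∣ q.2} := by
  refine ⟨?_, ?_, ?_⟩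
  · rintro ⟨x, y⟩ ⟨hx, hy⟩
    exact ⟨⟨hx, mul_ne_zero hx hy⟩, dvd_mul_right x y⟩
  · rintro ⟨x, y⟩ ⟨hx, -⟩ ⟨x', y'⟩ - h
    obtain ⟨rfl, hxy⟩ := Prod.mk.inj h
    exact Prod.ext rfl (mul_left_cancel₀ hx hxy)
  · rintro ⟨a, b⟩ ⟨⟨ha, hb⟩, c, hc⟩
    exact ⟨(a, c), ⟨ha, right_ne_zero_of_mul (hc ▸ hb)⟩, Prod.ext rfl hc.symm⟩

theorem not_mul_mul_dvd_right [CommMonoidWithZero M] [IsCancelMulZero M] {p : M}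
    (hp : ¬IsUnit p) (x : M) {y : M} (hy : y ≠ 0) : ¬p * x * y ∣ y := by
  intro h
  have hpx : p * x ∣ 1 := (mul_dvd_mul_iff_right hy).1 (by rwa [one_mul])
  exact hp (isUnit_of_mul_isUnit_left (isUnit_of_dvd_one hpx))

end

namespace IsDiscreteValuationRing

variable {R : Type*} [CommRing R] [IsDomain R] [IsDiscreteValuationRing R] {π : R}

theorem mul_dvd_of_not_dvd (hπ : Irreducible π) {a b : R} (h : ¬a ∣ b) : π * b ∣ a := by
  rw [← addVal_le_iff_dvd, not_le] at h
  rw [← addVal_le_iff_dvd, addVal_mul, addVal_uniformizer hπ, add_comm]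
  exact Order.add_one_le_of_lt h

theorem bijOn_uniformizer_mul (hπ : Irreducible π) :
    BijOn (fun q : R × R => (π * q.1 * q.2, q.2)) ({x | x ≠ 0} ×ˢ {x | x ≠ 0})
      {q | (q.1 ≠ 0 ∧ q.2 ≠ 0) ∧ ¬q.1 ∣ q.2} := by
  refine ⟨?_, ?_, ?_⟩
  · rintro ⟨x, y⟩ ⟨hx, hy⟩
    exact ⟨⟨mul_ne_zero (mul_ne_zero hπ.ne_zero hx) hy, hy⟩,
      not_mul_mul_dvd_right hπ.not_isUnit x hy⟩
  · rintro ⟨x, y⟩ ⟨-, hy⟩ ⟨x', y'⟩ - h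
    obtain ⟨hxy, rfl⟩ := Prod.mk.inj h
    exact Prod.ext (mul_left_cancel₀ hπ.ne_zero (mul_right_cancel₀ hy hxy)) rfl
  · rintro ⟨a, b⟩ ⟨⟨ha, hb⟩, hab⟩
    obtain ⟨x, hx⟩ := mul_dvd_of_not_dvd hπ hab
    refine ⟨(x, b), ⟨right_ne_zero_of_mul (hx ▸ ha), hb⟩, Prod.ext ?_ rfl⟩
    exact (mul_right_comm _ _ _).trans hx.symm

end IsDiscreteValuationRing

open Classical in
theorem disjoint_union_Rstar_sq_bij (R : Type*) [CommRing R] [IsDomain R]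
    [IsDiscreteValuationRing R] (π : R) (hπ : Irreducible π) :
    Set.BijOn
      (fun q : R × R × R =>
        if q.1 = 0 then (q.2.1, q.2.1 * q.2.2) else (π * q.2.1 * q.2.2, q.2.2))
      (({0} ×ˢ ({x : R | x ≠ 0} ×ˢ {x : R | x ≠ 0})) ∪
        ({1} ×ˢ ({x : R | x ≠ 0} ×ˢ {x : R | x ≠ 0})))
      ({x : R | x ≠ 0} ×ˢ {x : R | x ≠ 0}) ∧
    Set.BijOn (fun q : R × R => (q.1, q.1 * q.2))
      ({x : R | x ≠ 0} ×ˢ {x : R | x ≠ 0})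
      {q : R × R | (q.1 ≠ 0 ∧ q.2 ≠ 0) ∧ q.1 ∣ q.2} ∧
    Set.BijOn (fun q : R × R => (π * q.1 * q.2, q.2))
      ({x : R | x ≠ 0} ×ˢ {x : R | x ≠ 0})
      {q : R × R | (q.1 ≠ 0 ∧ q.2 ≠ 0) ∧ ¬ q.1 ∣ q.2} ∧
    {q : R × R | (q.1 ≠ 0 ∧ q.2 ≠ 0) ∧ q.1 ∣ q.2} ∪
        {q : R × R | (q.1 ≠ 0 ∧ q.2 ≠ 0) ∧ ¬ q.1 ∣ q.2} =
      {x : R | x ≠ 0} ×ˢ {x : R | x ≠ 0} ∧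
    {q : R × R | (q.1 ≠ 0 ∧ q.2 ≠ 0) ∧ q.1 ∣ q.2} ∩
        {q : R × R | (q.1 ≠ 0 ∧ q.2 ≠ 0) ∧ ¬ q.1 ∣ q.2} =
      ∅ := by
  have hdvd := bijOn_mk_mul_nonzero (M := R)
  have hndvd := IsDiscreteValuationRing.bijOn_uniformizer_mul hπ
  let N : Set (R × R) := {q | q.1 ≠ 0 ∧ q.2 ≠ 0}
  let D : Set (R × R) := {q | q.1 ∣ q.2}
  have hunion : N ∩ D ∪ N ∩ Dᶜ = N := inter_union_compl N D
  have hdisj : Disjoint (N ∩ D) (N ∩ Dᶜ) :=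
    disjoint_compl_right.mono inter_subset_right inter_subset_right
  have hinter := hdisj.inter_eq
  refine ⟨?_, hdvd, hndvd, hunion, hinter⟩
  have h := hdvd.ite_prod_union (zero_ne_one' R) hndvd hdisj
  convert h using 1
  exact hunion.symm
end

section
/- Let p be a prime, n > 1 a natural number, and let v = v_p(n) be the p-adic valuation of n. For every natural number k > v, the map x ↦ x^n is a bijection from {x ∈ ℤ_p : ‖x − 1‖ ≤ p^{−k}} onto {x ∈ ℤ_p : ‖x − 1‖ ≤ p^{−(k+v)}} (i.e. it maps 1 + p^k ℤ_p bijectively onto 1 + p^{k+v} ℤ_p). -/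
/-!
If `‖a - 1‖` and `‖b - 1‖` are both smaller than `‖n‖`, then in
`a ^ n - b ^ n = (a - b) * ∑ a ^ i * b ^ (n - 1 - i)` every summand is `1` up to an error
smaller than `‖n‖`, so the sum has norm exactly `‖n‖` and `‖a ^ n - b ^ n‖ = ‖n‖ * ‖a - b‖`.
This gives the inclusion and the injectivity. For surjectivity, Hensel's lemma applies to
`X ^ n - y` at `1`, since `‖y - 1‖ ≤ p ^ (-(k + v)) < p ^ (-2 v) = ‖n‖ ^ 2` as `k > v`.
-/

open Finset

namespace IsUltrametricDist

section SeminormedRing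

variable {R : Type*} [SeminormedRing R] [NormOneClass R] [IsUltrametricDist R]

lemma norm_le_one_of_norm_sub_one_le_one {a : R} (ha : ‖a - 1‖ ≤ 1) : ‖a‖ ≤ 1 := by
  simpa [ha] using norm_add_one_le_max_norm_one (a - 1)

lemma norm_geom_sum_le_one {a : R} (ha : ‖a‖ ≤ 1) (n : ℕ) : ‖∑ i ∈ range n, a ^ i‖ ≤ 1 :=
  norm_sum_le_of_forall_le_of_nonneg zero_le_one fun i _ =>
    (_root_.norm_pow_le a i).trans (pow_le_one₀ (norm_nonneg a) ha)

lemma norm_pow_sub_one_le {a : R} (ha : ‖a‖ ≤ 1) (n : ℕ) : ‖a ^ n - 1‖ ≤ ‖a - 1‖ := by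
  rw [← geom_sum_mul]
  exact (norm_mul_le _ _).trans <|
    mul_le_of_le_one_left (norm_nonneg _) (norm_geom_sum_le_one ha n)

lemma norm_pow_mul_pow_sub_one_le {a b : R} (ha : ‖a‖ ≤ 1) (hb : ‖b‖ ≤ 1) (i j : ℕ) :
    ‖a ^ i * b ^ j - 1‖ ≤ max ‖a - 1‖ ‖b - 1‖ := by
  have hsplit : a ^ i * b ^ j - 1 = a ^ i * (b ^ j - 1) + (a ^ i - 1) := by noncomm_ring
  have hleft : ‖a ^ i * (b ^ j - 1)‖ ≤ ‖b - 1‖ := calc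
    ‖a ^ i * (b ^ j - 1)‖ ≤ ‖a ^ i‖ * ‖b ^ j - 1‖ := norm_mul_le _ _
    _ ≤ ‖b ^ j - 1‖ := mul_le_of_le_one_left (norm_nonneg _) <|
        (_root_.norm_pow_le a i).trans (pow_le_one₀ (norm_nonneg a) ha)
    _ ≤ ‖b - 1‖ := norm_pow_sub_one_le hb j
  rw [hsplit, max_comm]
  exact (norm_add_le_max _ _).trans (max_le_max hleft (norm_pow_sub_one_le ha i))

lemma norm_geom_sum₂_sub_natCast_le {a b : R} (ha : ‖a‖ ≤ 1) (hb : ‖b‖ ≤ 1) (n : ℕ) :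
    ‖∑ i ∈ range n, a ^ i * b ^ (n - 1 - i) - n‖ ≤ max ‖a - 1‖ ‖b - 1‖ := by
  have hsum : ∑ i ∈ range n, a ^ i * b ^ (n - 1 - i) - n =
      ∑ i ∈ range n, (a ^ i * b ^ (n - 1 - i) - 1) := by
    simp [sum_sub_distrib]
  rw [hsum]
  exact norm_sum_le_of_forall_le_of_nonneg (le_max_of_le_left (norm_nonneg _))
    fun i _ => norm_pow_mul_pow_sub_one_le ha hb i _

end SeminormedRing

variable {R : Type*} [SeminormedCommRing R] [NormOneClass R] [NormMulClass R]
  [IsUltrametricDist R]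

theorem norm_pow_sub_pow_eq {a b : R} {n : ℕ} (ha : ‖a - 1‖ < ‖(n : R)‖)
    (hb : ‖b - 1‖ < ‖(n : R)‖) : ‖a ^ n - b ^ n‖ = ‖(n : R)‖ * ‖a - b‖ := by
  set S := ∑ i ∈ range n, a ^ i * b ^ (n - 1 - i)
  have hn := norm_natCast_le_one R n
  have hS : ‖S - n‖ < ‖(n : R)‖ :=
    (norm_geom_sum₂_sub_natCast_le (norm_le_one_of_norm_sub_one_le_one (ha.le.trans hn))
      (norm_le_one_of_norm_sub_one_le_one (hb.le.trans hn)) n).trans_lt (max_lt ha hb)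
  have hSn : ‖S‖ = ‖(n : R)‖ := by
    rw [← sub_add_cancel S n, norm_add_eq_max_of_norm_ne_norm hS.ne, max_eq_right hS.le]
  rw [← geom_sum₂_mul, norm_mul, hSn]

end IsUltrametricDist

namespace PadicInt

variable {p : ℕ} [Fact p.Prime]

lemma norm_natCast_eq_zpow {n : ℕ} (hn : n ≠ 0) :
    ‖(n : ℤ_[p])‖ = (p : ℝ) ^ (-(padicValNat p n : ℤ)) := by
  rw [norm_def, coe_natCast, Padic.norm_eq_zpow_neg_valuation (by exact_mod_cast hn),
    Padic.valuation_natCast]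

theorem bijOn_pow_of_lt_norm_natCast {n : ℕ} (hn : n ≠ 0) {r : ℝ} (hr : r < ‖(n : ℤ_[p])‖) :
    Set.BijOn (fun x : ℤ_[p] => x ^ n) {x | ‖x - 1‖ ≤ r} {x | ‖x - 1‖ ≤ ‖(n : ℤ_[p])‖ * r} := by
  have hn_pos : 0 < ‖(n : ℤ_[p])‖ := norm_pos_iff.2 (Nat.cast_ne_zero.2 hn)
  have hone : ‖(1 : ℤ_[p]) - 1‖ < ‖(n : ℤ_[p])‖ := by simpa using hn_pos
  have hpow_one {x : ℤ_[p]} (hx : ‖x - 1‖ < ‖(n : ℤ_[p])‖) :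
      ‖x ^ n - 1‖ = ‖(n : ℤ_[p])‖ * ‖x - 1‖ := by
    simpa using IsUltrametricDist.norm_pow_sub_pow_eq hx hone
  refine ⟨fun x (hx : ‖x - 1‖ ≤ r) => ?_, fun x (hx : ‖x - 1‖ ≤ r) y (hy : ‖y - 1‖ ≤ r) hxy => ?_,
    fun y (hy : ‖y - 1‖ ≤ ‖(n : ℤ_[p])‖ * r) => ?_⟩
  · show ‖x ^ n - 1‖ ≤ _
    rw [hpow_one (hx.trans_lt hr)]
    exact mul_le_mul_of_nonneg_left hx hn_pos.le
  · have h := IsUltrametricDist.norm_pow_sub_pow_eq (hx.trans_lt hr) (hy.trans_lt hr)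
    rw [show x ^ n = y ^ n from hxy, sub_self, norm_zero, eq_comm, mul_eq_zero] at h
    exact sub_eq_zero.1 (norm_eq_zero.1 (h.resolve_left hn_pos.ne'))
  · set F : Polynomial ℤ_[p] := Polynomial.X ^ n - Polynomial.C y
    have hF' : F.derivative.aeval (1 : ℤ_[p]) = n := by simp [F, Polynomial.derivative_X_pow]
    have hF : ‖F.aeval (1 : ℤ_[p])‖ < ‖F.derivative.aeval (1 : ℤ_[p])‖ ^ 2 := by
      rw [hF', sq]
      simpa [F, norm_sub_rev] using hy.trans_lt (mul_lt_mul_of_pos_left hr hn_pos)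
    obtain ⟨z, hz, hz1, -, -⟩ := hensels_lemma hF
    rw [hF'] at hz1
    have hzy : z ^ n = y := by simpa [F, sub_eq_zero] using hz
    refine ⟨z, ?_, hzy⟩
    have hy' : ‖(n : ℤ_[p])‖ * ‖z - 1‖ ≤ ‖(n : ℤ_[p])‖ * r := by
      rw [← hpow_one hz1, hzy]; exact hy
    exact le_of_mul_le_mul_left hy' hn_pos

end PadicInt

theorem pow_n_bijOn_ball (p : ℕ) [Fact p.Prime] (n : ℕ) (hn : 1 < n)
    (k : ℕ) (hk : padicValNat p n < k) :
    Set.BijOn (fun x : ℤ_[p] => x ^ n)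
      {x : ℤ_[p] | ‖x - 1‖ ≤ (p : ℝ) ^ (-(k : ℤ))}
      {x : ℤ_[p] | ‖x - 1‖ ≤ (p : ℝ) ^ (-(k + padicValNat p n : ℤ))} := by
  have hp : (1 : ℝ) < p := by exact_mod_cast (Fact.out : p.Prime).one_lt
  have hn0 : n ≠ 0 := by omega
  have hnorm := PadicInt.norm_natCast_eq_zpow (p := p) hn0
  have hr : (p : ℝ) ^ (-(k : ℤ)) < ‖(n : ℤ_[p])‖ := by
    rw [hnorm]; exact zpow_lt_zpow_right₀ hp (by omega)
  convert PadicInt.bijOn_pow_of_lt_norm_natCast hn0 hr using 3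
  rw [hnorm, ← zpow_add₀ (by positivity)]
  ring_nf
end

section
/- Let p be an odd prime and k ≥ 1 a natural number. The map sending (0, x) ↦ x² and (1, x) ↦ p·x², for x ∈ R^{(k)}, is a well-defined bijection from the disjoint union ({0} × R^{(k)}) ∪ ({1} × R^{(k)}) onto R^{(k)}. -/
section aux
variable {p : ℕ} [Fact p.Prime]

lemma aOne_norm_two (hp : Odd p) : ‖(2 : ℤ_[p])‖ = 1 := by
  have h2 : ¬ ((p : ℤ) ∣ (2 : ℤ)) := by
    intro h
    have hle : (p:ℤ) ≤ 2 := Int.le_of_dvd two_pos h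
    have h2 : p ≤ 2 := by exact_mod_cast hle
    have := (Fact.out : p.Prime).two_le
    have : p = 2 := le_antisymm h2 this
    rw [this] at hp
    exact (Nat.not_odd_iff_even.mpr even_two) hp
  have h1 : ‖((2:ℤ) : ℤ_[p])‖ = 1 := by
    rcases lt_or_eq_of_le (PadicInt.norm_le_one ((2:ℤ) : ℤ_[p])) with h | h
    · exact absurd ((PadicInt.norm_int_lt_one_iff_dvd 2).mp h) h2
    · exact h
  simpa using h1

lemma aOne_one_lt_p : (1 : ℝ) < p := by
  exact_mod_cast (Fact.out : p.Prime).one_lt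

lemma aOne_p_pos : (0 : ℝ) < p := lt_trans one_pos aOne_one_lt_p

lemma aOne_p_ne_zero : (p : ℝ) ≠ 0 := ne_of_gt aOne_p_pos

/-- square root of elements ≡ 1 mod p^k, p odd, k ≥ 1 -/
lemma aOne_sqrt (hp : Odd p) {k : ℕ} (hk : 1 ≤ k) {u : ℤ_[p]}
    (hu : ‖u - 1‖ ≤ (p : ℝ) ^ (-(k:ℤ))) :
    ∃ v : ℤ_[p], v ^ 2 = u ∧ ‖v - 1‖ ≤ (p : ℝ) ^ (-(k:ℤ)) := by
  have hplt := aOne_one_lt_p (p := p)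
  have hlt1 : (p : ℝ) ^ (-(k:ℤ)) < 1 := by
    have h0 : (-(k:ℤ)) < 0 := by omega
    calc (p : ℝ) ^ (-(k:ℤ)) < (p:ℝ) ^ (0:ℤ) := zpow_lt_zpow_right₀ hplt h0
    _ = 1 := zpow_zero _
  have hu1 : ‖u - 1‖ < 1 := lt_of_le_of_lt hu hlt1
  set F : Polynomial ℤ_[p] := Polynomial.X ^ 2 - Polynomial.C u with hF
  have hevF : ∀ z : ℤ_[p], F.eval z = z ^ 2 - u := by intro z; simp [hF]
  have hder : ∀ z : ℤ_[p], F.derivative.eval z = 2 * z := by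
    intro z; simp [hF]; ring_nf; simp
  have hnorm : ‖F.eval 1‖ < ‖F.derivative.eval 1‖ ^ 2 := by
    rw [hevF, hder, mul_one, aOne_norm_two hp, one_pow]
    rw [show (1:ℤ_[p]) - u = -(u - 1) by ring, norm_neg, one_pow]
    exact hu1
  obtain ⟨z, hz0, hz1, -, -⟩ := hensels_lemma hnorm
  simp only [Polynomial.coe_aeval_eq_eval] at hz0 hz1
  rw [hevF, sub_eq_zero] at hz0
  rw [hder, mul_one, aOne_norm_two hp] at hz1
  refine ⟨z, hz0, ?_⟩
  have hzp1 : ‖z + 1‖ = 1 := by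
    have hne : ‖z - 1‖ ≠ ‖(2:ℤ_[p])‖ := by rw [aOne_norm_two hp]; exact ne_of_lt hz1
    have h2 : z + 1 = (z - 1) + 2 := by ring
    rw [h2, PadicInt.norm_add_eq_max_of_ne hne, aOne_norm_two hp]
    exact max_eq_right (le_of_lt hz1)
  have hprod : ‖z - 1‖ * ‖z + 1‖ = ‖u - 1‖ := by
    rw [← norm_mul]
    congr 1
    have h3 : (z - 1) * (z + 1) = z ^ 2 - 1 := by ring
    rw [h3, hz0]
  rw [hzp1, mul_one] at hprod
  rw [hprod]; exact hu

/-- If `‖x - p^m‖ ≤ p^{-(m+k)}` with `k ≥ 1`, then `‖x‖ = p^{-m}`. -/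
lemma aOne_norm_eq {k : ℕ} (hk : 1 ≤ k) {x : ℤ_[p]} {m : ℕ}
    (h : ‖x - (p:ℤ_[p]) ^ m‖ ≤ (p : ℝ) ^ (-(m + k : ℤ))) :
    ‖x‖ = (p : ℝ) ^ (-(m : ℤ)) := by
  have hlt : (p:ℝ) ^ (-(m + k : ℤ)) < (p:ℝ) ^ (-(m:ℤ)) :=
    zpow_lt_zpow_right₀ aOne_one_lt_p (by omega)
  have hlt' := lt_of_le_of_lt h hlt
  have hne : ‖x - (p:ℤ_[p]) ^ m‖ ≠ ‖(p:ℤ_[p]) ^ m‖ := by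
    rw [PadicInt.norm_p_pow]; exact ne_of_lt hlt'
  have hx : x = (x - (p:ℤ_[p]) ^ m) + (p:ℤ_[p]) ^ m := by ring
  conv_lhs => rw [hx]
  rw [PadicInt.norm_add_eq_max_of_ne hne, PadicInt.norm_p_pow]
  exact max_eq_right (le_of_lt hlt')

/-- squaring keeps membership (witness doubles) -/
lemma aOne_sq_bound {k : ℕ} (hk : 1 ≤ k) {x : ℤ_[p]} {m : ℕ}
    (h : ‖x - (p:ℤ_[p]) ^ m‖ ≤ (p : ℝ) ^ (-(m + k : ℤ))) :
    ‖x ^ 2 - (p:ℤ_[p]) ^ (2 * m)‖ ≤ (p : ℝ) ^ (-(2 * m + k : ℤ)) := by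
  have hfac : x ^ 2 - (p:ℤ_[p]) ^ (2 * m)
      = (x - (p:ℤ_[p]) ^ m) * (x + (p:ℤ_[p]) ^ m) := by
    rw [two_mul, pow_add]; ring
  have hxm : ‖x + (p:ℤ_[p]) ^ m‖ ≤ (p:ℝ) ^ (-(m:ℤ)) := by
    refine le_trans (PadicInt.nonarchimedean _ _) ?_
    rw [aOne_norm_eq hk h, PadicInt.norm_p_pow]
    simp
  rw [hfac, norm_mul]
  calc ‖x - (p:ℤ_[p]) ^ m‖ * ‖x + (p:ℤ_[p]) ^ m‖
      ≤ (p:ℝ) ^ (-(m + k : ℤ)) * (p:ℝ) ^ (-(m:ℤ)) := by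
        apply mul_le_mul h hxm (norm_nonneg _) (le_of_lt (zpow_pos aOne_p_pos _))
    _ = (p:ℝ) ^ (-(2 * m + k : ℤ)) := by
        rw [← zpow_add₀ aOne_p_ne_zero]; ring_nf

/-- injectivity of squaring on angOne-type elements -/
lemma aOne_sq_inj (hp : Odd p) {k : ℕ} (hk : 1 ≤ k) {x y : ℤ_[p]} {m n : ℕ}
    (hx : ‖x - (p:ℤ_[p]) ^ m‖ ≤ (p : ℝ) ^ (-(m + k : ℤ)))
    (hy : ‖y - (p:ℤ_[p]) ^ n‖ ≤ (p : ℝ) ^ (-(n + k : ℤ)))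
    (hsq : x ^ 2 = y ^ 2) : x = y := by
  have hfac : (x - y) * (x + y) = 0 := by
    have : (x - y) * (x + y) = x ^ 2 - y ^ 2 := by ring
    rw [this, hsq, sub_self]
  rcases mul_eq_zero.mp hfac with h | h
  · exact sub_eq_zero.mp h
  · -- x = -y, contradiction
    exfalso
    have hxy : x = -y := by linear_combination h
    have hnx := aOne_norm_eq hk hx
    have hny := aOne_norm_eq hk hy
    have hmn : m = n := by
      rw [hxy, norm_neg, hny] at hnx
      have := zpow_right_injective₀ aOne_p_pos (ne_of_gt aOne_one_lt_p) hnx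
      omega
    subst hmn
    have hsum : (x - (p:ℤ_[p]) ^ m) + (y - (p:ℤ_[p]) ^ m) = -(2 * (p:ℤ_[p]) ^ m) := by
      rw [hxy]; ring
    have hbig : ‖(x - (p:ℤ_[p]) ^ m) + (y - (p:ℤ_[p]) ^ m)‖ = (p:ℝ) ^ (-(m:ℤ)) := by
      rw [hsum, norm_neg, norm_mul, aOne_norm_two hp, one_mul,
        PadicInt.norm_p_pow]
    have hsmall : ‖(x - (p:ℤ_[p]) ^ m) + (y - (p:ℤ_[p]) ^ m)‖ ≤ (p:ℝ) ^ (-(m + k : ℤ)) :=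
      le_trans (PadicInt.nonarchimedean _ _) (max_le hx hy)
    rw [hbig] at hsmall
    exact absurd hsmall (not_le_of_gt (zpow_lt_zpow_right₀ aOne_one_lt_p (by omega)))

end aux

/-- `R^{(k)}`: the nonzero elements of `ℤ_p` with angular component congruent
to `1` modulo `p^k`. -/
def angOne (p : ℕ) [Fact p.Prime] (k : ℕ) : Set ℤ_[p] :=
  {x | ∃ m : ℕ, ‖x - (p : ℤ_[p]) ^ m‖ ≤ (p : ℝ) ^ (-(m + k : ℤ))}

open Classical in
theorem disjoint_union_Rk_bij_odd (p : ℕ) [Fact p.Prime] (hp : Odd p)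
    (k : ℕ) (hk : 1 ≤ k) :
    Set.BijOn
      (fun q : ℤ_[p] × ℤ_[p] => if q.1 = 0 then q.2 ^ 2 else (p : ℤ_[p]) * q.2 ^ 2)
      (({0} ×ˢ angOne p k) ∪ ({1} ×ˢ angOne p k))
      (angOne p k) := by
  have hpR : (p:ℝ) ≠ 0 := aOne_p_ne_zero
  have hpZ : (p : ℤ_[p]) ≠ 0 := Nat.cast_ne_zero.mpr (Fact.out : p.Prime).ne_zero
  -- norm of image elements
  refine ⟨?_, ?_, ?_⟩
  · -- MapsTo
    rintro ⟨a, x⟩ (⟨ha, hx⟩ | ⟨ha, hx⟩)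
    · simp only [Set.mem_singleton_iff] at ha
      obtain ⟨m, hm⟩ := hx
      simp only [ha, if_pos rfl]
      exact ⟨2 * m, by
        have := aOne_sq_bound hk hm
        convert this using 2 <;> simp⟩
    · simp only [Set.mem_singleton_iff] at ha
      obtain ⟨m, hm⟩ := hx
      simp only [ha, if_neg (one_ne_zero : (1:ℤ_[p]) ≠ 0)]
      refine ⟨2 * m + 1, ?_⟩
      have hfac : (p:ℤ_[p]) * x ^ 2 - (p:ℤ_[p]) ^ (2*m+1)
          = (p:ℤ_[p]) * (x ^ 2 - (p:ℤ_[p]) ^ (2*m)) := by rw [pow_succ]; ring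
      rw [hfac, norm_mul, PadicInt.norm_p]
      calc (p:ℝ)⁻¹ * ‖x ^ 2 - (p:ℤ_[p]) ^ (2*m)‖
          ≤ (p:ℝ)⁻¹ * (p:ℝ) ^ (-(2*m + k : ℤ)) := by
            apply mul_le_mul_of_nonneg_left (aOne_sq_bound hk hm)
              (inv_nonneg.mpr (le_of_lt aOne_p_pos))
        _ = (p:ℝ) ^ (-(↑(2*m+1) + k : ℤ)) := by
            rw [← zpow_neg_one, ← zpow_add₀ hpR]
            congr 1; push_cast; ring
  · -- InjOn
    rintro ⟨a, x⟩ (⟨ha, hx⟩ | ⟨ha, hx⟩) ⟨b, y⟩ (⟨hb, hy⟩ | ⟨hb, hy⟩) heq <;>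
      simp only [Set.mem_singleton_iff] at ha hb <;> subst ha <;> subst hb <;>
      obtain ⟨m, hm⟩ := hx <;> obtain ⟨n, hn⟩ := hy <;>
      simp only [if_pos rfl, if_true, if_neg (one_ne_zero : (1:ℤ_[p]) ≠ 0)] at heq
    · exact Prod.ext rfl (aOne_sq_inj hp hk hm hn heq)
    · -- x^2 = p * y^2 : parity contradiction
      exfalso
      have h1 : ‖x ^ 2‖ = (p:ℝ) ^ (-(2*m : ℤ)) := by
        rw [pow_two, norm_mul, aOne_norm_eq hk hm, ← zpow_add₀ hpR]
        congr 1; ring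
      have h2 : ‖(p:ℤ_[p]) * y ^ 2‖ = (p:ℝ) ^ (-(2*n+1 : ℤ)) := by
        rw [norm_mul, PadicInt.norm_p, pow_two, norm_mul,
          aOne_norm_eq hk hn, ← zpow_neg_one, ← zpow_add₀ hpR, ← zpow_add₀ hpR]
        congr 1; ring
      rw [heq, h2] at h1
      have := zpow_right_injective₀ aOne_p_pos (ne_of_gt aOne_one_lt_p) h1
      omega
    · exfalso
      have h1 : ‖y ^ 2‖ = (p:ℝ) ^ (-(2*n : ℤ)) := by
        rw [pow_two, norm_mul, aOne_norm_eq hk hn, ← zpow_add₀ hpR]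
        congr 1; ring
      have h2 : ‖(p:ℤ_[p]) * x ^ 2‖ = (p:ℝ) ^ (-(2*m+1 : ℤ)) := by
        rw [norm_mul, PadicInt.norm_p, pow_two, norm_mul,
          aOne_norm_eq hk hm, ← zpow_neg_one, ← zpow_add₀ hpR, ← zpow_add₀ hpR]
        congr 1; ring
      rw [← heq, h2] at h1
      have := zpow_right_injective₀ aOne_p_pos (ne_of_gt aOne_one_lt_p) h1
      omega
    · have hxy := mul_left_cancel₀ hpZ heq
      exact Prod.ext rfl (aOne_sq_inj hp hk hm hn hxy)
  · -- SurjOn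
    intro y hy
    obtain ⟨m, hm⟩ := hy
    -- extract u with y = p^m * u, ‖u - 1‖ ≤ p^{-k}
    have hm' : ‖y - (p:ℤ_[p]) ^ m‖ ≤ (p:ℝ) ^ (-(↑(m+k)) : ℤ) := by
      rw [show (-(↑(m+k)):ℤ) = -(↑m+↑k) by push_cast; ring]
      exact hm
    have hdvd : (p:ℤ_[p]) ^ (m+k) ∣ (y - (p:ℤ_[p]) ^ m) :=
      Ideal.mem_span_singleton.mp
        ((PadicInt.norm_le_pow_iff_mem_span_pow _ (m+k)).mp hm')
    obtain ⟨t, ht⟩ := hdvd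
    set u : ℤ_[p] := 1 + (p:ℤ_[p]) ^ k * t with hu_def
    have hyu : y = (p:ℤ_[p]) ^ m * u := by
      rw [hu_def, mul_add, mul_one, ← mul_assoc, ← pow_add]
      rw [← ht]; ring
    have hu : ‖u - 1‖ ≤ (p:ℝ) ^ (-(k:ℤ)) := by
      rw [hu_def, add_sub_cancel_left, norm_mul, PadicInt.norm_p_pow]
      calc (p:ℝ) ^ (-(k:ℤ)) * ‖t‖ ≤ (p:ℝ) ^ (-(k:ℤ)) * 1 :=
            mul_le_mul_of_nonneg_left (PadicInt.norm_le_one t)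
              (le_of_lt (zpow_pos aOne_p_pos _))
        _ = (p:ℝ) ^ (-(k:ℤ)) := mul_one _
    obtain ⟨v, hv2, hv1⟩ := aOne_sqrt hp hk hu
    have hvmem : ∀ n : ℕ, (p:ℤ_[p]) ^ n * v ∈ angOne p k := by
      intro n
      refine ⟨n, ?_⟩
      have : (p:ℤ_[p]) ^ n * v - (p:ℤ_[p]) ^ n = (p:ℤ_[p]) ^ n * (v - 1) := by ring
      rw [this, norm_mul, PadicInt.norm_p_pow]
      calc (p:ℝ) ^ (-(n:ℤ)) * ‖v - 1‖ ≤ (p:ℝ) ^ (-(n:ℤ)) * (p:ℝ) ^ (-(k:ℤ)) :=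
            mul_le_mul_of_nonneg_left hv1 (le_of_lt (zpow_pos aOne_p_pos _))
        _ = (p:ℝ) ^ (-(n + k : ℤ)) := by rw [← zpow_add₀ hpR]; congr 1; ring
    rcases Nat.even_or_odd m with ⟨n, hn⟩ | ⟨n, hn⟩
    · refine ⟨(0, (p:ℤ_[p]) ^ n * v), Or.inl ⟨rfl, hvmem n⟩, ?_⟩
      simp only [if_pos rfl, if_true]
      rw [mul_pow, ← pow_mul, hv2, hyu, hn, show n + n = n * 2 by omega]
    · refine ⟨(1, (p:ℤ_[p]) ^ n * v), Or.inr ⟨rfl, hvmem n⟩, ?_⟩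
      simp only [if_neg (one_ne_zero : (1:ℤ_[p]) ≠ 0)]
      rw [mul_pow, ← pow_mul, hv2, hyu, hn, ← mul_assoc]
      rw [show (p:ℤ_[p]) * (p:ℤ_[p]) ^ (n*2) = (p:ℤ_[p]) ^ (2*n+1) by
        rw [pow_succ, mul_comm ((p:ℤ_[p])^(2*n)) _, Nat.mul_comm n 2]]
end

section
/- Let k ≥ 1 be a natural number and work in ℚ_2. The map sending (i, x) ↦ 2^i·x³ for i ∈ {0, 1, 2} and x ∈ R^{(k)} is a well-defined bijection from the disjoint union ({0} × R^{(k)}) ∪ ({1} × R^{(k)}) ∪ ({2} × R^{(k)}) onto R^{(k)}. -/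
/-- `R^{(k)}`: the nonzero elements of `ℤ_2` with angular component congruent
to `1` modulo `2^k`. -/
def angOne2 (k : ℕ) : Set ℤ_[2] :=
  {x | ∃ m : ℕ, ‖x - (2 : ℤ_[2]) ^ m‖ ≤ (2 : ℝ) ^ (-(m + k : ℤ))}

section aux

lemma norm_two_pow2 (m : ℕ) : ‖(2 : ℤ_[2]) ^ m‖ = (2 : ℝ) ^ (-(m : ℤ)) := by
  have := PadicInt.norm_p_pow (p := 2) m
  simpa using this

lemma norm_two_pow2_ne (m : ℕ) : ‖(2 : ℤ_[2]) ^ m‖ ≠ 0 := by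
  rw [norm_two_pow2]; positivity

lemma two_pow_ne_zero2 (m : ℕ) : ((2 : ℤ_[2]) ^ m) ≠ 0 := by
  intro h
  have := norm_two_pow2_ne m
  rw [h, norm_zero] at this
  exact this rfl

lemma mem_angOne2_iff {k : ℕ} {x : ℤ_[2]} :
    x ∈ angOne2 k ↔ ∃ (m : ℕ) (u : ℤ_[2]),
      ‖u - 1‖ ≤ (2 : ℝ) ^ (-(k : ℤ)) ∧ x = 2 ^ m * u := by
  constructor
  · rintro ⟨m, hm⟩
    have h2 : x - 2 ^ m ∈ (Ideal.span {(2 : ℤ_[2]) ^ (m + k)} : Ideal ℤ_[2]) := by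
      apply (PadicInt.norm_le_pow_iff_mem_span_pow (p := 2) (x - 2 ^ m) (m + k)).mp
      have hcast : (((2:ℕ)) : ℝ) ^ (-((m + k : ℕ)) : ℤ) = (2 : ℝ) ^ (-(↑m + ↑k) : ℤ) := by
        push_cast; ring_nf
      rw [hcast]; exact hm
    rw [Ideal.mem_span_singleton] at h2
    obtain ⟨c, hc⟩ := h2
    refine ⟨m, 1 + 2 ^ k * c, ?_, ?_⟩
    · have he : (1 : ℤ_[2]) + 2 ^ k * c - 1 = 2 ^ k * c := by ring
      rw [he, norm_mul, norm_two_pow2]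
      calc (2:ℝ) ^ (-(k:ℤ)) * ‖c‖ ≤ (2:ℝ) ^ (-(k:ℤ)) * 1 := by
            apply mul_le_mul_of_nonneg_left (PadicInt.norm_le_one c); positivity
        _ = (2:ℝ) ^ (-(k:ℤ)) := mul_one _
    · have he : x = 2 ^ m + (x - 2 ^ m) := by ring
      rw [he, hc]; ring
  · rintro ⟨m, u, hu, rfl⟩
    refine ⟨m, ?_⟩
    have he : (2 : ℤ_[2]) ^ m * u - 2 ^ m = 2 ^ m * (u - 1) := by ring
    rw [he, norm_mul, norm_two_pow2]
    calc (2:ℝ) ^ (-(m:ℤ)) * ‖u - 1‖ ≤ (2:ℝ) ^ (-(m:ℤ)) * (2:ℝ) ^ (-(k:ℤ)) := by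
          apply mul_le_mul_of_nonneg_left hu; positivity
      _ = (2:ℝ) ^ (-(m + k : ℤ)) := by rw [← zpow_add₀ (by norm_num : (2:ℝ) ≠ 0)]; ring_nf

lemma unit_half {k : ℕ} (hk : 1 ≤ k) {u : ℤ_[2]} (hu : ‖u - 1‖ ≤ (2 : ℝ) ^ (-(k : ℤ))) :
    ‖u - 1‖ ≤ 2⁻¹ := by
  refine hu.trans ?_
  have he : (2:ℝ)⁻¹ = (2:ℝ) ^ (-(1:ℤ)) := by norm_num
  rw [he]
  exact zpow_le_zpow_right₀ (by norm_num) (by omega)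

lemma norm_unit {u : ℤ_[2]} (hu : ‖u - 1‖ ≤ 2⁻¹) : ‖u‖ = 1 := by
  have h1 : ‖u‖ ≤ 1 := PadicInt.norm_le_one u
  have h2 : (1 : ℝ) ≤ ‖u‖ := by
    by_contra h
    push_neg at h
    have hle := PadicInt.nonarchimedean u (-(u - 1))
    have he : u + -(u - 1) = (1 : ℤ_[2]) := by ring
    rw [he, norm_one, norm_neg] at hle
    rcases max_cases ‖u‖ ‖u - 1‖ with ⟨h3, _⟩ | ⟨h3, _⟩ <;> rw [h3] at hle <;> linarith
  linarith

lemma norm_three : ‖(3 : ℤ_[2])‖ = 1 := by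
  have h1 : ‖(3 : ℤ_[2])‖ ≤ 1 := PadicInt.norm_le_one _
  have h2 : ¬ ‖((3 : ℤ) : ℤ_[2])‖ < 1 := by
    rw [PadicInt.norm_int_lt_one_iff_dvd]
    decide
  have he : ((3 : ℤ) : ℤ_[2]) = (3 : ℤ_[2]) := by norm_cast
  rw [he] at h2
  push_neg at h2
  linarith

lemma norm_quad {u v : ℤ_[2]} (hu : ‖u - 1‖ ≤ 2⁻¹) (hv : ‖v - 1‖ ≤ 2⁻¹) :
    ‖u ^ 2 + u * v + v ^ 2‖ = 1 := by
  set d : ℤ_[2] := u ^ 2 + u * v + v ^ 2 - 3 with hd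
  have hdec : d = (u - 1) * (u + 1) + ((u - 1) * v + (v - 1)) + (v - 1) * (v + 1) := by
    rw [hd]; ring
  have hnd : ‖d‖ ≤ 2⁻¹ := by
    rw [hdec]
    have t1 : ‖(u - 1) * (u + 1)‖ ≤ 2⁻¹ := by
      rw [norm_mul]
      calc ‖u-1‖ * ‖u+1‖ ≤ 2⁻¹ * 1 :=
            mul_le_mul hu (PadicInt.norm_le_one _) (norm_nonneg _) (by norm_num)
        _ = 2⁻¹ := mul_one _
    have t2 : ‖(u - 1) * v + (v - 1)‖ ≤ 2⁻¹ := by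
      refine (PadicInt.nonarchimedean _ _).trans (max_le ?_ hv)
      rw [norm_mul]
      calc ‖u-1‖ * ‖v‖ ≤ 2⁻¹ * 1 :=
            mul_le_mul hu (PadicInt.norm_le_one _) (norm_nonneg _) (by norm_num)
        _ = 2⁻¹ := mul_one _
    have t3 : ‖(v - 1) * (v + 1)‖ ≤ 2⁻¹ := by
      rw [norm_mul]
      calc ‖v-1‖ * ‖v+1‖ ≤ 2⁻¹ * 1 :=
            mul_le_mul hv (PadicInt.norm_le_one _) (norm_nonneg _) (by norm_num)
        _ = 2⁻¹ := mul_one _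
    exact (PadicInt.nonarchimedean _ _).trans
      (max_le ((PadicInt.nonarchimedean _ _).trans (max_le t1 t2)) t3)
  have he : u ^ 2 + u * v + v ^ 2 = 3 + d := by rw [hd]; ring
  rw [he]
  have hle : ‖(3 : ℤ_[2]) + d‖ ≤ 1 :=
    (PadicInt.nonarchimedean _ _).trans
      (max_le (le_of_eq norm_three) (hnd.trans (by norm_num)))
  have hge : (1 : ℝ) ≤ ‖(3 : ℤ_[2]) + d‖ := by
    by_contra h
    push_neg at h
    have hle2 := PadicInt.nonarchimedean ((3 : ℤ_[2]) + d) (-d)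
    have he2 : (3 : ℤ_[2]) + d + -d = 3 := by ring
    rw [he2, norm_three, norm_neg] at hle2
    rcases max_cases ‖(3:ℤ_[2]) + d‖ ‖d‖ with ⟨h4, _⟩ | ⟨h4, _⟩ <;> rw [h4] at hle2 <;> linarith
  linarith

lemma cube_inj {u v : ℤ_[2]} (hu : ‖u - 1‖ ≤ 2⁻¹) (hv : ‖v - 1‖ ≤ 2⁻¹)
    (h : u ^ 3 = v ^ 3) : u = v := by
  have hq : ‖u ^ 2 + u * v + v ^ 2‖ = 1 := norm_quad hu hv
  have hne : u ^ 2 + u * v + v ^ 2 ≠ 0 := by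
    intro h0; rw [h0, norm_zero] at hq; norm_num at hq
  have h0 : (u - v) * (u ^ 2 + u * v + v ^ 2) = 0 := by linear_combination h
  rcases mul_eq_zero.mp h0 with h1 | h1
  · exact sub_eq_zero.mp h1
  · exact absurd h1 hne

lemma cube_surj {k : ℕ} (hk : 1 ≤ k) {w : ℤ_[2]} (hw : ‖w - 1‖ ≤ (2 : ℝ) ^ (-(k : ℤ))) :
    ∃ u : ℤ_[2], ‖u - 1‖ ≤ (2 : ℝ) ^ (-(k : ℤ)) ∧ u ^ 3 = w := by
  set F : Polynomial ℤ_[2] := Polynomial.X ^ 3 - Polynomial.C w with hF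
  have hFe : F.eval 1 = 1 - w := by simp [hF]
  have hFd : F.derivative = Polynomial.C 3 * Polynomial.X ^ 2 := by
    rw [hF]
    simp [Polynomial.derivative_X_pow]
    rw [← Polynomial.C_1, ← Polynomial.C_add]; norm_num
  have hFd1 : F.derivative.eval 1 = 3 := by rw [hFd]; simp
  have hnorm : ‖F.eval 1‖ < ‖F.derivative.eval 1‖ ^ 2 := by
    rw [hFe, hFd1, norm_three]
    have he : ‖(1 : ℤ_[2]) - w‖ = ‖w - 1‖ := by rw [← norm_neg]; ring_nf
    rw [he]
    have hlt : (2:ℝ) ^ (-(k:ℤ)) < 1 := zpow_lt_one_of_neg₀ (by norm_num) (by omega)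
    nlinarith [hw]
  obtain ⟨z, hz0, hz1, -, -⟩ := hensels_lemma hnorm
  have hz3 : z ^ 3 = w := sub_eq_zero.mp (by simpa [hF] using hz0)
  rw [Polynomial.coe_aeval_eq_eval, hFd1, norm_three] at hz1
  have hzhalf : ‖z - 1‖ ≤ 2⁻¹ := by
    have := (PadicInt.norm_le_pow_iff_norm_lt_pow_add_one (z - 1) (-1)).mpr (by simpa using hz1)
    simpa using this
  refine ⟨z, ?_, hz3⟩
  have hquad : ‖z ^ 2 + z * 1 + 1 ^ 2‖ = 1 := norm_quad hzhalf (by simp)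
  have hfac : w - 1 = (z - 1) * (z ^ 2 + z * 1 + 1 ^ 2) := by rw [← hz3]; ring
  have he : ‖w - 1‖ = ‖z - 1‖ := by rw [hfac, norm_mul, hquad, mul_one]
  linarith

lemma cube_mem {k : ℕ} (hk : 1 ≤ k) {u : ℤ_[2]} (hu : ‖u - 1‖ ≤ (2 : ℝ) ^ (-(k : ℤ))) :
    ‖u ^ 3 - 1‖ ≤ (2 : ℝ) ^ (-(k : ℤ)) := by
  have hquad : ‖u ^ 2 + u * 1 + 1 ^ 2‖ = 1 := norm_quad (unit_half hk hu) (by simp)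
  have hfac : u ^ 3 - 1 = (u - 1) * (u ^ 2 + u * 1 + 1 ^ 2) := by ring
  rw [hfac, norm_mul, hquad, mul_one]
  exact hu

lemma pow_mul_cube_inj {k : ℕ} (hk : 1 ≤ k) {i j : ℕ} (hi : i < 3) (hj : j < 3)
    {x y : ℤ_[2]} (hx : x ∈ angOne2 k) (hy : y ∈ angOne2 k)
    (h : (2 : ℤ_[2]) ^ i * x ^ 3 = 2 ^ j * y ^ 3) : i = j ∧ x = y := by
  obtain ⟨m, u, hu, rfl⟩ := mem_angOne2_iff.mp hx
  obtain ⟨n, v, hv, rfl⟩ := mem_angOne2_iff.mp hy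
  have hnu : ‖u‖ = 1 := norm_unit (unit_half hk hu)
  have hnv : ‖v‖ = 1 := norm_unit (unit_half hk hv)
  have h' : (2 : ℤ_[2]) ^ (i + 3 * m) * u ^ 3 = 2 ^ (j + 3 * n) * v ^ 3 := by
    calc (2 : ℤ_[2]) ^ (i + 3 * m) * u ^ 3 = 2 ^ i * (2 ^ m * u) ^ 3 := by
          rw [pow_add, mul_pow, ← pow_mul]; ring
      _ = 2 ^ j * (2 ^ n * v) ^ 3 := h
      _ = 2 ^ (j + 3 * n) * v ^ 3 := by
          rw [pow_add, mul_pow, ← pow_mul]; ring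
  have hnu3 : ‖u ^ 3‖ = 1 := by
    rw [pow_succ, pow_succ, pow_one, norm_mul, norm_mul, hnu]; ring
  have hnv3 : ‖v ^ 3‖ = 1 := by
    rw [pow_succ, pow_succ, pow_one, norm_mul, norm_mul, hnv]; ring
  have hnorm : (2:ℝ) ^ (-(i + 3 * m : ℕ) : ℤ) = (2:ℝ) ^ (-(j + 3 * n : ℕ) : ℤ) := by
    have hcong := congrArg (‖·‖) h'
    simp only [norm_mul] at hcong
    rwa [norm_two_pow2, norm_two_pow2, hnu3, hnv3, mul_one, mul_one] at hcong
  have hexp : i + 3 * m = j + 3 * n := by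
    have := (zpow_right_strictMono₀ (by norm_num : (1:ℝ) < 2)).injective hnorm
    omega
  have hij : i = j := by omega
  have hmn : m = n := by omega
  subst hij; subst hmn
  have hu3v3 : u ^ 3 = v ^ 3 := mul_left_cancel₀ (two_pow_ne_zero2 _) h'
  exact ⟨rfl, by rw [cube_inj (unit_half hk hu) (unit_half hk hv) hu3v3]⟩

lemma map_mem {k : ℕ} (hk : 1 ≤ k) (i : ℕ) {x : ℤ_[2]} (hx : x ∈ angOne2 k) :
    (2 : ℤ_[2]) ^ i * x ^ 3 ∈ angOne2 k := by
  obtain ⟨m, u, hu, rfl⟩ := mem_angOne2_iff.mp hx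
  refine mem_angOne2_iff.mpr ⟨i + 3 * m, u ^ 3, cube_mem hk hu, ?_⟩
  rw [pow_add, mul_pow, ← pow_mul]; ring

end aux

open Classical in
theorem disjoint_union_Rk_bij_two (k : ℕ) (hk : 1 ≤ k) :
    Set.BijOn
      (fun q : ℤ_[2] × ℤ_[2] =>
        if q.1 = 0 then q.2 ^ 3 else if q.1 = 1 then 2 * q.2 ^ 3 else 2 ^ 2 * q.2 ^ 3)
      (({0} ×ˢ angOne2 k) ∪ ({1} ×ˢ angOne2 k) ∪ ({2} ×ˢ angOne2 k))
      (angOne2 k) := by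
  have h20 : (2 : ℤ_[2]) ≠ 0 := by
    intro h
    have := norm_two_pow2_ne 1
    rw [pow_one, h, norm_zero] at this; exact this rfl
  have h10 : (1 : ℤ_[2]) ≠ 0 := one_ne_zero
  have h21 : (2 : ℤ_[2]) ≠ 1 := by
    intro h
    exact h10 (by linear_combination h)
  have hmem : ∀ q : ℤ_[2] × ℤ_[2],
      q ∈ (({0} ×ˢ angOne2 k) ∪ ({1} ×ˢ angOne2 k) ∪ ({2} ×ˢ angOne2 k)) ↔
      ((q.1 = 0 ∨ q.1 = 1 ∨ q.1 = 2) ∧ q.2 ∈ angOne2 k) := by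
    intro q
    simp only [Set.mem_union, Set.mem_prod, Set.mem_singleton_iff]
    tauto
  refine ⟨?_, ?_, ?_⟩
  · -- MapsTo
    intro q hq
    rw [hmem] at hq
    obtain ⟨h1, h2⟩ := hq
    rcases h1 with h | h | h <;> simp only [h, if_pos, if_neg h10, if_neg h20, if_neg h21,
      if_true, if_false, eq_self_iff_true]
    · simpa using map_mem hk 0 h2
    · simpa using map_mem hk 1 h2
    · simpa using map_mem hk 2 h2
  · -- InjOn
    intro q1 hq1 q2 hq2 heq
    rw [hmem] at hq1
    rw [hmem] at hq2
    obtain ⟨h1, hx1⟩ := hq1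
    obtain ⟨h2, hx2⟩ := hq2
    have key : ∀ i j : ℕ, i < 3 → j < 3 → (2:ℤ_[2]) ^ i * q1.2 ^ 3 = 2 ^ j * q2.2 ^ 3 →
        i = j ∧ q1.2 = q2.2 := fun i j hi hj h => pow_mul_cube_inj hk hi hj hx1 hx2 h
    rcases h1 with h | h | h <;> rcases h2 with h' | h' | h' <;>
      simp only [h, h', if_pos, if_neg h10, if_neg h20, if_neg h21, if_true, if_false,
        eq_self_iff_true] at heq
    · obtain ⟨-, hxy⟩ := key 0 0 (by norm_num) (by norm_num) (by linear_combination heq)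
      exact Prod.ext (h.trans h'.symm) hxy
    · obtain ⟨hij, -⟩ := key 0 1 (by norm_num) (by norm_num) (by linear_combination heq)
      omega
    · obtain ⟨hij, -⟩ := key 0 2 (by norm_num) (by norm_num) (by linear_combination heq)
      omega
    · obtain ⟨hij, -⟩ := key 1 0 (by norm_num) (by norm_num) (by linear_combination heq)
      omega
    · obtain ⟨-, hxy⟩ := key 1 1 (by norm_num) (by norm_num) (by linear_combination heq)
      exact Prod.ext (h.trans h'.symm) hxy
    · obtain ⟨hij, -⟩ := key 1 2 (by norm_num) (by norm_num) (by linear_combination heq)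
      omega
    · obtain ⟨hij, -⟩ := key 2 0 (by norm_num) (by norm_num) (by linear_combination heq)
      omega
    · obtain ⟨hij, -⟩ := key 2 1 (by norm_num) (by norm_num) (by linear_combination heq)
      omega
    · obtain ⟨-, hxy⟩ := key 2 2 (by norm_num) (by norm_num) (by linear_combination heq)
      exact Prod.ext (h.trans h'.symm) hxy
  · -- SurjOn
    intro y hy
    obtain ⟨m, w, hw, rfl⟩ := mem_angOne2_iff.mp hy
    obtain ⟨u, hu, hu3⟩ := cube_surj hk hw
    have hm : m = 3 * (m / 3) + m % 3 := by omega
    have hi : m % 3 < 3 := Nat.mod_lt _ (by norm_num)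
    have hx : (2 : ℤ_[2]) ^ (m / 3) * u ∈ angOne2 k := mem_angOne2_iff.mpr ⟨m / 3, u, hu, rfl⟩
    have himg : (2:ℤ_[2]) ^ (m % 3) * ((2:ℤ_[2]) ^ (m / 3) * u) ^ 3 = 2 ^ m * w := by
      conv_rhs => rw [hm]
      rw [← hu3, pow_add, mul_pow, ← pow_mul]; ring
    interval_cases hc : (m % 3)
    · refine ⟨((0:ℤ_[2]), 2 ^ (m / 3) * u), (hmem _).mpr ⟨Or.inl rfl, hx⟩, ?_⟩
      simp only [if_pos, if_true, eq_self_iff_true]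
      simpa using himg
    · refine ⟨((1:ℤ_[2]), 2 ^ (m / 3) * u), (hmem _).mpr ⟨Or.inr (Or.inl rfl), hx⟩, ?_⟩
      simp only [if_neg h10, if_pos, if_true, eq_self_iff_true]
      simpa using himg
    · refine ⟨((2:ℤ_[2]), 2 ^ (m / 3) * u), (hmem _).mpr ⟨Or.inr (Or.inr rfl), hx⟩, ?_⟩
      simp only [if_neg h20, if_neg h21]
      simpa using himg
end

section
/- Let F be a finite field of characteristic p, K = LaurentSeries F, and t = single 1 1 ∈ K. Then the map g : K × K → K given by g(x, y) = x^p + t·y^p is injective. -/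
/-!
In characteristic `p`, `(x, y) ↦ x ^ p + t * y ^ p` is additive, so it suffices that
`x ^ p = t * y ^ p` forces `y = 0`. For `y ≠ 0` the orders of the two sides are `p * ord x`
and `1 + p * ord y`, which differ modulo `p`.
-/

namespace HahnSeries

instance charP {Γ R : Type*} [AddCommMonoid Γ] [PartialOrder Γ] [IsOrderedCancelAddMonoid Γ]
    [NonAssocSemiring R] (p : ℕ) [CharP R p] : CharP (HahnSeries Γ R) p :=
  charP_of_injective_ringHom C_injective p

theorem pow_ne_single_mul_pow {R : Type*} [Semiring R] [NoZeroDivisors R] {p : ℕ} {g : ℤ}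
    (hg : ¬ (p : ℤ) ∣ g) {r : R} (hr : IsRegular r) (x : LaurentSeries R)
    {y : LaurentSeries R} (hy : y ≠ 0) : x ^ p ≠ single g r * y ^ p := by
  intro h
  have hord := congrArg order h
  rw [order_pow, order_single_mul_of_isRegular hr (pow_ne_zero p hy), order_pow,
    nsmul_eq_mul, nsmul_eq_mul] at hord
  exact hg ⟨x.order - y.order, by linarith⟩

end HahnSeries

theorem frobenius_plane_into_line_injective_general (F : Type*) [Field F]
    (p : ℕ) [Fact p.Prime] [CharP F p] :
    Function.Injective
      (fun xy : LaurentSeries F × LaurentSeries F =>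
        xy.1 ^ p + HahnSeries.single (1 : ℤ) (1 : F) * xy.2 ^ p) := by
  have hp : p ≠ 0 := (Fact.out : p.Prime).ne_zero
  have hp_not_dvd_one : ¬ (p : ℤ) ∣ 1 := by
    exact_mod_cast (Fact.out : p.Prime).not_dvd_one
  rintro ⟨x₁, y₁⟩ ⟨x₂, y₂⟩ h
  have key : (x₁ - x₂) ^ p = HahnSeries.single 1 1 * (y₂ - y₁) ^ p := by
    rw [sub_pow_char, sub_pow_char]
    linear_combination h
  have hy : y₂ - y₁ = 0 := by
    by_contra hy
    exact HahnSeries.pow_ne_single_mul_pow hp_not_dvd_one isRegular_one _ hy key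
  rw [hy, zero_pow hp, mul_zero, pow_eq_zero_iff hp] at key
  exact Prod.ext (sub_eq_zero.mp key) (sub_eq_zero.mp hy).symm

theorem frobenius_plane_into_line_injective (F : Type*) [Field F] [Fintype F]
    (p : ℕ) [Fact p.Prime] [CharP F p] :
    Function.Injective
      (fun xy : LaurentSeries F × LaurentSeries F =>
        xy.1 ^ p + HahnSeries.single (1 : ℤ) (1 : F) * xy.2 ^ p) :=
  frobenius_plane_into_line_injective_general F p
end

section
/- Let F be a finite field with q elements, K = LaurentSeries F, t = single 1 1 ∈ K, and let x ∈ K be nonzero with order(x) ≥ 0. Then the leading coefficient of x (the coefficient of x at its order) equals 1 if and only if there exist y ∈ K and a natural number n ≤ q − 2 such that y ≠ 0, order(y) ≥ 0, and x = t^n · y^{q−1}. (Hence the set R^{(1)} of elements of the valuation ring with angular component 1 is definable with parameter t.) -/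
/-!
Write `x = t^m u` with `u ∈ F⟦X⟧` and `u(0) = lc x`. When `lc x = 1`, Hensel's lemma for
`Y^(q-1) - u` (whose derivative `q - 1 = -1` is a unit) gives `u = b^(q-1)`, and dividing
`m = (q-1) a + n` with remainder yields `x = t^n (t^a b)^(q-1)`. Conversely, the leading
coefficient is multiplicative and every `c ∈ Fˣ` satisfies `c^(q-1) = 1`.
-/

open PowerSeries

namespace PowerSeries

variable {R : Type*} [CommRing R]

theorem exists_pow_eq_of_constantCoeff_eq_one {k : ℕ} (hk0 : k ≠ 0) (hk : IsUnit (k : R))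
    {u : R⟦X⟧} (hu : constantCoeff u = 1) : ∃ b : R⟦X⟧, b ^ k = u := by
  have hroot : (Polynomial.X ^ k - Polynomial.C u).eval 1 ∈ Ideal.span {(X : R⟦X⟧)} := by
    simp [Ideal.mem_span_singleton, X_dvd_iff, hu]
  have hderiv : IsUnit (Ideal.Quotient.mk (Ideal.span {(X : R⟦X⟧)})
      ((Polynomial.X ^ k - Polynomial.C u).derivative.eval 1)) := by
    refine IsUnit.map _ ?_
    simpa [Polynomial.derivative_X_pow, isUnit_iff_constantCoeff] using hk
  obtain ⟨b, hb, -⟩ := HenselianRing.is_henselian _ (Polynomial.monic_X_pow_sub_C u hk0) 1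
    hroot hderiv
  exact ⟨b, by simpa [sub_eq_zero] using hb⟩

end PowerSeries

theorem HahnSeries.leadingCoeff_pow {Γ R : Type*} [AddCommMonoid Γ] [LinearOrder Γ]
    [IsOrderedCancelAddMonoid Γ] [Semiring R] [NoZeroDivisors R] (x : HahnSeries Γ R) (n : ℕ) :
    (x ^ n).leadingCoeff = x.leadingCoeff ^ n := by
  induction n with
  | zero => simp
  | succ n ih => rw [pow_succ, leadingCoeff_mul, ih, pow_succ]

theorem LaurentSeries.order_coe_nonneg {R : Type*} [Semiring R] (f : R⟦X⟧) :
    0 ≤ (f : LaurentSeries R).order := by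
  rw [← HahnSeries.zero_le_orderTop_iff, HahnSeries.le_orderTop_iff_forall]
  intro j hj
  rw [HahnSeries.ofPowerSeries_apply, HahnSeries.embDomain_of_notMem_range]
  rintro ⟨n, rfl⟩
  exact (WithTop.coe_lt_coe.mp hj).not_ge n.cast_nonneg

theorem leading_coeff_one_iff_general (F : Type*) [Field F] [Fintype F]
    (x : LaurentSeries F) (hord : 0 ≤ x.order) :
    x.coeff x.order = 1 ↔
      ∃ (y : LaurentSeries F) (n : ℕ), n ≤ Fintype.card F - 2 ∧ y ≠ 0 ∧
        0 ≤ y.order ∧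
        x = (HahnSeries.single (1 : ℤ) (1 : F)) ^ n * y ^ (Fintype.card F - 1) := by
  set q := Fintype.card F
  have hq : 1 < q := Fintype.one_lt_card
  rw [← HahnSeries.leadingCoeff_eq]
  constructor
  · intro h
    have hx : x ≠ 0 := by rintro rfl; simp at h
    have hunit : IsUnit ((q - 1 : ℕ) : F) := by
      simp [q, Nat.cast_pred Fintype.card_pos]
    have hu : constantCoeff x.powerSeriesPart = 1 := by
      simpa [← coeff_zero_eq_constantCoeff_apply, HahnSeries.leadingCoeff_eq] using h
    obtain ⟨b, hb⟩ := exists_pow_eq_of_constantCoeff_eq_one (by omega) hunit hu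
    set m := x.order.toNat
    have hxb : ((X ^ (m % (q - 1)) * (X ^ (m / (q - 1)) * b) ^ (q - 1) : F⟦X⟧) :
        LaurentSeries F) = x := by
      rw [mul_pow, ← pow_mul, ← mul_assoc, ← pow_add, Nat.mod_add_div', hb]
      exact LaurentSeries.X_order_mul_powerSeriesPart (Int.toNat_of_nonneg hord)
    refine ⟨(X ^ (m / (q - 1)) * b : F⟦X⟧), m % (q - 1),
      by have := Nat.mod_lt m (show 0 < q - 1 by omega); omega, ?_,
      LaurentSeries.order_coe_nonneg _, ?_⟩
    · intro hy
      rw [← hxb, map_mul, map_pow _ _ (q - 1), hy, zero_pow (by omega), mul_zero] at hx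
      exact hx rfl
    · rw [← hxb, map_mul, map_pow, map_pow, HahnSeries.ofPowerSeries_X]
  · rintro ⟨y, n, -, hy, -, rfl⟩
    simpa [HahnSeries.leadingCoeff_pow] using
      FiniteField.pow_card_sub_one_eq_one _ (HahnSeries.leadingCoeff_ne_zero.mpr hy)

theorem leading_coeff_one_iff (F : Type*) [Field F] [Fintype F]
    (x : LaurentSeries F) (hx : x ≠ 0) (hord : 0 ≤ x.order) :
    x.coeff x.order = 1 ↔
      ∃ (y : LaurentSeries F) (n : ℕ), n ≤ Fintype.card F - 2 ∧ y ≠ 0 ∧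
        0 ≤ y.order ∧
        x = (HahnSeries.single (1 : ℤ) (1 : F)) ^ n * y ^ (Fintype.card F - 1) :=
  leading_coeff_one_iff_general F x hord
end
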